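/- arXiv:2504.05406 — 8 statements merged into one kernel-verified Lean document; each statement's English description precedes it below -/
import Mathlib

section
/- If G is a graph with girth greater than 3l, then every intersecting family of paths in G, each of length at most l (i.e., at most l edges), is a star. -/
/-- `s` is the vertex set of a path of length (number of edges) at most `l` in `G`. -/
def IsShortPathSet {V : Type*} [DecidableEq V] (G : SimpleGraph V) (l : ℕ) (s : Finset V) : Prop :=
  ∃ (u w : V) (p : G.Walk u w), p.IsPath ∧ p.length ≤ l ∧ s = p.support.toFinset

/-!
Fix the path `P` carrying one member of the family; every member meets `P`. Choose a member `B`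
whose first vertex `v` along `P` comes as late as possible, and let `C` be any member, first met
at `x`, so that `x` comes no later than `v`. Walk inside `C` from `x` to the nearest vertex `z` of
`B`, then inside `B` from `z` to `v`: this is a path of length at most `2l`, while the segment of
`P` from `x` to `v` has length at most `l`. Below girth `3l + 1` paths with the same ends and total
length at most `3l` coincide, so the segment passes through `z ∈ B ∩ C`, and by the choice of `B`
this forces `z = v`, hence `v ∈ C`.
-/

namespace SimpleGraph.Walk

variable {V : Type*} {G : SimpleGraph V} {u v w x y : V}

theorem IsPath.eq_of_length_add_length_lt_egirth {p q : G.Walk u v} (hp : p.IsPath)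
    (hq : q.IsPath) (h : ((p.length + q.length : ℕ) : ℕ∞) < G.egirth) : p = q := by
  by_contra hne
  obtain ⟨_, _, _, c, hc, hlen⟩ := hp.exists_isCycle_length_le_add_of_ne hq hne
  exact (egirth_le_length hc).not_gt (lt_of_le_of_lt (by exact_mod_cast hlen) h)

theorem IsPath.append {p : G.Walk u v} {q : G.Walk v w} (hp : p.IsPath)
    (hq : q.IsPath) (h : ∀ x ∈ p.support, x ∈ q.support → x = v) : (p.append q).IsPath := by
  have hq' := hq.support_nodup
  rw [← cons_tail_support q, List.nodup_cons] at hq'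
  rw [isPath_def, support_append, List.nodup_append]
  refine ⟨hp.support_nodup, hq'.2, fun a ha b hb hab => ?_⟩
  subst hab
  have := h a ha (by rw [← cons_tail_support q]; exact List.mem_cons_of_mem _ hb)
  subst this
  exact hq'.1 hb

theorem IsPath.exists_isPath_support_subset [DecidableEq V] {p : G.Walk u v} (hp : p.IsPath)
    (hx : x ∈ p.support) (hy : y ∈ p.support) :
    ∃ r : G.Walk x y, r.IsPath ∧ r.length ≤ p.length ∧ r.support ⊆ p.support := by
  by_cases hyd : y ∈ (p.dropUntil x hx).support
  · refine ⟨(p.dropUntil x hx).takeUntil y hyd, (hp.dropUntil hx).takeUntil hyd,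
      (length_takeUntil_le_length _ _).trans (length_dropUntil_le_length _ _), ?_⟩
    exact List.Subset.trans (support_takeUntil_subset_support _ _)
      (support_dropUntil_subset_support _ _)
  · have hyt : y ∈ (p.takeUntil x hx).support := by
      rw [← take_spec p hx, mem_support_append_iff] at hy
      exact hy.resolve_right hyd
    refine ⟨((p.takeUntil x hx).dropUntil y hyt).reverse,
      ((hp.takeUntil hx).dropUntil hyt).reverse, ?_, ?_⟩
    · rw [length_reverse]
      exact (length_dropUntil_le_length _ _).trans (length_takeUntil_le_length _ _)
    · rw [support_reverse, List.reverse_subset]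
      exact List.Subset.trans (support_dropUntil_subset_support _ _)
        (support_takeUntil_subset_support _ _)

theorem exists_forall_mem_of_crossing (P : G.Walk u w) (F : Finset (Finset V)) (hF : F.Nonempty)
    (hmeet : ∀ B ∈ F, ∃ x ∈ P.support, x ∈ B)
    (hcross : ∀ B ∈ F, ∀ C ∈ F, ∀ {x y : V} (s : G.Walk x y), s.IsSubwalk P → x ∈ C → y ∈ B →
      ∃ z ∈ s.support, z ∈ B ∧ z ∈ C) :
    ∃ v, ∀ B ∈ F, v ∈ B := by
  let first (B : Finset V) : ℕ := sInf {i | P.getVert i ∈ B}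
  have first_mem (B) (hB : B ∈ F) : P.getVert (first B) ∈ B := by
    obtain ⟨x, hx, hxB⟩ := hmeet B hB
    obtain ⟨i, rfl, -⟩ := mem_support_iff_exists_getVert.mp hx
    exact Nat.sInf_mem (s := {i | P.getVert i ∈ B}) ⟨i, hxB⟩
  obtain ⟨B, hB, hmax⟩ := F.exists_max_image first hF
  refine ⟨P.getVert (first B), fun C hC => ?_⟩
  have hCB : first C ≤ first B := hmax C hC
  let s := (P.take (first B)).drop (first C)
  have hsP : s.IsSubwalk P := (isSubwalk_drop _ _).trans (isSubwalk_take _ _)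
  obtain ⟨z, hzs, hzB, hzC⟩ := hcross B hB C hC s hsP
    (by rw [take_getVert, min_eq_right hCB]; exact first_mem C hC) (first_mem B hB)
  obtain ⟨k, rfl, -⟩ := mem_support_iff_exists_getVert.mp ((isSubwalk_drop _ _).support_subset hzs)
  rw [take_getVert] at hzB hzC
  have : first B ≤ min (first B) k := Nat.sInf_le hzB
  rwa [min_eq_left (this.trans (min_le_right _ _))] at hzC

end SimpleGraph.Walk

open SimpleGraph Walk

theorem IsShortPathSet.exists_path {V : Type*} [DecidableEq V] {G : SimpleGraph V} {l : ℕ}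
    {s : Finset V} (hs : IsShortPathSet G l s) {x y : V} (hx : x ∈ s) (hy : y ∈ s) :
    ∃ r : G.Walk x y, r.IsPath ∧ r.length ≤ l ∧ ∀ z ∈ r.support, z ∈ s := by
  obtain ⟨u, w, p, hp, hpl, rfl⟩ := hs
  rw [List.mem_toFinset] at hx hy
  obtain ⟨r, hr, hrl, hrp⟩ := hp.exists_isPath_support_subset hx hy
  exact ⟨r, hr, hrl.trans hpl, fun z hz => List.mem_toFinset.mpr (hrp hz)⟩

theorem IsShortPathSet.exists_mem_support_of_egirth {V : Type*} [DecidableEq V]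
    {G : SimpleGraph V} {l : ℕ} (hg : 3 * (l : ℕ∞) < G.egirth) {B C : Finset V}
    (hB : IsShortPathSet G l B) (hC : IsShortPathSet G l C) (hBC : (B ∩ C).Nonempty)
    {x y : V} {s : G.Walk x y} (hs : s.IsPath) (hsl : s.length ≤ l) (hx : x ∈ C) (hy : y ∈ B) :
    ∃ z ∈ s.support, z ∈ B ∧ z ∈ C := by
  obtain ⟨z₀, hz₀⟩ := hBC
  rw [Finset.mem_inter] at hz₀
  obtain ⟨r₀, hr₀, hr₀l, hr₀C⟩ := hC.exists_path hx hz₀.2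
  set T := {n | ∃ z ∈ B, ∃ r : G.Walk x z, r.IsPath ∧ r.length = n ∧ ∀ t ∈ r.support, t ∈ C}
  have hT : r₀.length ∈ T := ⟨z₀, hz₀.1, r₀, hr₀, rfl, hr₀C⟩
  -- a shortest path inside `C` from `x` to `B` meets `B` only at its end
  obtain ⟨z, hzB, r₁, hr₁, hr₁n, hr₁C⟩ := Nat.sInf_mem ⟨_, hT⟩
  have hr₁l : r₁.length ≤ l := hr₁n ▸ (Nat.sInf_le hT).trans hr₀l
  have hr₁B (t) (ht : t ∈ r₁.support) (htB : t ∈ B) : t = z := by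
    by_contra hne
    have hlt := length_takeUntil_lt_length ht hne
    have : sInf T ≤ (r₁.takeUntil t ht).length := Nat.sInf_le ⟨t, htB, _, hr₁.takeUntil ht, rfl,
      fun a ha => hr₁C a (support_takeUntil_subset_support _ _ ha)⟩
    omega
  obtain ⟨r₂, hr₂, hr₂l, hr₂B⟩ := hB.exists_path hzB hy
  have hr : (r₁.append r₂).IsPath := hr₁.append hr₂ fun t ht₁ ht₂ => hr₁B t ht₁ (hr₂B t ht₂)
  have hsr : s = r₁.append r₂ := by
    refine hs.eq_of_length_add_length_lt_egirth hr (lt_of_le_of_lt ?_ hg)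
    rw [length_append]
    exact_mod_cast (by omega : s.length + (r₁.length + r₂.length) ≤ 3 * l)
  refine ⟨z, ?_, hzB, hr₁C z r₁.end_mem_support⟩
  rw [hsr, mem_support_append_iff]
  exact Or.inl r₁.end_mem_support

theorem girth_intersecting_paths_star_general {V : Type*} [DecidableEq V]
    (G : SimpleGraph V) (l : ℕ) (hg : 3 * (l : ℕ∞) < G.egirth)
    (F : Finset (Finset V)) (hF : F.Nonempty)
    (hpath : ∀ s ∈ F, IsShortPathSet G l s)
    (hint : ∀ A ∈ F, ∀ B ∈ F, (A ∩ B).Nonempty) :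
    ∃ v : V, ∀ A ∈ F, v ∈ A := by
  obtain ⟨A, hA⟩ := hF
  obtain ⟨u, w, P, hP, hPl, rfl⟩ := hpath _ hA
  refine exists_forall_mem_of_crossing P F ⟨_, hA⟩ (fun B hB => ?_)
    fun B hB C hC _ _ s hs hx hy => ?_
  · obtain ⟨x, hx⟩ := hint _ hA B hB
    rw [Finset.mem_inter, List.mem_toFinset] at hx
    exact ⟨x, hx⟩
  · exact (hpath B hB).exists_mem_support_of_egirth hg (hpath C hC) (hint B hB C hC)
      (isPath_of_isSubwalk hs hP) ((length_le_of_isSubwalk hs).trans hPl) hx hy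

/-- If `G` has girth greater than `3l`, every intersecting family of paths of length
at most `l` is a star. -/
theorem girth_intersecting_paths_star {V : Type*} [Fintype V] [DecidableEq V]
    (G : SimpleGraph V) (l : ℕ) (hg : 3 * (l : ℕ∞) < G.egirth)
    (F : Finset (Finset V)) (hF : F.Nonempty)
    (hpath : ∀ s ∈ F, IsShortPathSet G l s)
    (hint : ∀ A ∈ F, ∀ B ∈ F, (A ∩ B).Nonempty) :
    ∃ v : V, ∀ A ∈ F, v ∈ A :=
  girth_intersecting_paths_star_general G l hg F hF hpath hint
end

section
/- If F is a triangular intersecting family of finite sets, then |F| ≤ 1 + min over A ∈ F of |A|. -/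
/-- A triangular intersecting family has size at most `1 + min_{A ∈ F} |A|`. -/
theorem triangular_card_le {α : Type*} [DecidableEq α]
    (F : Finset (Finset α))
    (hint : ∀ A ∈ F, ∀ B ∈ F, (A ∩ B).Nonempty)
    (htri : ∀ A ∈ F, ∀ B ∈ F, ∀ C ∈ F, A ≠ B → A ≠ C → B ≠ C → A ∩ B ∩ C = ∅) :
    ∀ A ∈ F, F.card ≤ 1 + A.card := by
  intro A hA
  have hAne : A.Nonempty := by
    have := hint A hA A hA
    simpa using this
  classical
  set f : Finset α → α := fun B => if h : (A ∩ B).Nonempty then h.choose else hAne.choose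
  have hmem : ∀ B ∈ F.erase A, f B ∈ A ∩ B := by
    intro B hB
    have hBF := Finset.mem_of_mem_erase hB
    have h := hint A hA B hBF
    simp only [f, dif_pos h]
    exact h.choose_spec
  have hcard : (F.erase A).card ≤ A.card := by
    apply Finset.card_le_card_of_injOn f
    · intro B hB
      exact (Finset.mem_inter.mp (hmem B hB)).1
    · intro B hB C hC hfeq
      by_contra hne
      have hBA : A ≠ B := fun h => (Finset.ne_of_mem_erase hB) h.symm
      have hCA : A ≠ C := fun h => (Finset.ne_of_mem_erase hC) h.symm
      have hempty := htri A hA B (Finset.mem_of_mem_erase hB) C (Finset.mem_of_mem_erase hC) hBA hCA hne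
      have h1 := hmem B hB
      have h2 := hmem C hC
      rw [hfeq] at h1
      have : f C ∈ A ∩ B ∩ C := by
        simp only [Finset.mem_inter] at *
        exact ⟨h1, h2.2⟩
      rw [hempty] at this
      exact absurd this (Finset.notMem_empty _)
  have := Finset.card_erase_add_one hA
  omega
end

section
/- If F is a triangular intersecting family of finite sets with at least two members, then its transversal number τ(F) equals ⌈|F|/2⌉. -/
private lemma exists_transversal_aux {α : Type*} [DecidableEq α]
    (F : Finset (Finset α))
    (hint : ∀ A ∈ F, ∀ B ∈ F, (A ∩ B).Nonempty)
    (htri : ∀ A ∈ F, ∀ B ∈ F, ∀ C ∈ F, A ≠ B → A ≠ C → B ≠ C → A ∩ B ∩ C = ∅) :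
    ∃ X : Finset α, (∀ A ∈ F, (X ∩ A).Nonempty) ∧ X.card = (F.card + 1) / 2 ∧
      X ⊆ F.biUnion id := by
  induction F using Finset.strongInduction with
  | _ F ih =>
  rcases Nat.lt_or_ge F.card 2 with hc | hc
  · rcases Finset.eq_empty_or_nonempty F with rfl | ⟨A, hA⟩
    · exact ⟨∅, by simp, by simp, by simp⟩
    · have hF1 : F = {A} := by
        apply Finset.eq_singleton_iff_unique_mem.mpr
        refine ⟨hA, fun B hB => ?_⟩
        by_contra hne
        have := Finset.one_lt_card.mpr ⟨B, hB, A, hA, hne⟩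
        omega
      obtain ⟨a, ha⟩ := hint A hA A hA
      rw [Finset.mem_inter] at ha
      refine ⟨{a}, ?_, ?_, ?_⟩
      · intro B hB
        rw [hF1, Finset.mem_singleton] at hB; subst hB
        exact ⟨a, Finset.mem_inter.mpr ⟨Finset.mem_singleton_self a, ha.1⟩⟩
      · simp [hF1]
      · intro y hy
        rw [Finset.mem_singleton] at hy; subst hy
        exact Finset.mem_biUnion.mpr ⟨A, hA, ha.1⟩
  · obtain ⟨A, hA, B, hB, hAB⟩ := Finset.one_lt_card.mp hc
    obtain ⟨x, hx⟩ := hint A hA B hB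
    rw [Finset.mem_inter] at hx
    set F' := (F.erase A).erase B with hF'def
    have hsubset : F' ⊆ F :=
      (Finset.erase_subset _ _).trans (Finset.erase_subset _ _)
    have hBA : B ∈ F.erase A := Finset.mem_erase.mpr ⟨Ne.symm hAB, hB⟩
    have hssub : F' ⊂ F :=
      Finset.ssubset_of_ssubset_of_subset (Finset.erase_ssubset hBA)
        (Finset.erase_subset _ _)
    have hF'card : F'.card = F.card - 2 := by
      rw [hF'def, Finset.card_erase_of_mem hBA, Finset.card_erase_of_mem hA]
      omega
    have hmemF' : ∀ C ∈ F', C ∈ F ∧ C ≠ A ∧ C ≠ B := by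
      intro C hC
      rw [hF'def, Finset.mem_erase, Finset.mem_erase] at hC
      exact ⟨hC.2.2, hC.2.1, hC.1⟩
    obtain ⟨X', hXt, hXc, hXs⟩ := ih F' hssub
      (fun A' hA' B' hB' => hint A' (hsubset hA') B' (hsubset hB'))
      (fun A' hA' B' hB' C' hC' => htri A' (hsubset hA') B' (hsubset hB') C' (hsubset hC'))
    have hxX' : x ∉ X' := by
      intro hmem
      obtain ⟨C, hC, hxC⟩ := Finset.mem_biUnion.mp (hXs hmem)
      obtain ⟨hCF, hCA, hCB⟩ := hmemF' C hC
      have h0 := htri A hA B hB C hCF hAB (Ne.symm hCA) (Ne.symm hCB)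
      have : x ∈ A ∩ B ∩ C := by
        simp only [Finset.mem_inter]
        exact ⟨⟨hx.1, hx.2⟩, hxC⟩
      rw [h0] at this
      exact absurd this (Finset.notMem_empty x)
    refine ⟨insert x X', ?_, ?_, ?_⟩
    · intro D hD
      by_cases hDA : D = A
      · exact ⟨x, Finset.mem_inter.mpr ⟨Finset.mem_insert_self _ _, hDA ▸ hx.1⟩⟩
      by_cases hDB : D = B
      · exact ⟨x, Finset.mem_inter.mpr ⟨Finset.mem_insert_self _ _, hDB ▸ hx.2⟩⟩
      · have hDF' : D ∈ F' := by
          rw [hF'def, Finset.mem_erase, Finset.mem_erase]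
          exact ⟨hDB, hDA, hD⟩
        obtain ⟨y, hy⟩ := hXt D hDF'
        rw [Finset.mem_inter] at hy
        exact ⟨y, Finset.mem_inter.mpr ⟨Finset.mem_insert_of_mem hy.1, hy.2⟩⟩
    · rw [Finset.card_insert_of_notMem hxX', hXc, hF'card]
      omega
    · intro y hy
      rcases Finset.mem_insert.mp hy with rfl | hy'
      · exact Finset.mem_biUnion.mpr ⟨A, hA, hx.1⟩
      · exact Finset.biUnion_subset_biUnion_of_subset_left _ hsubset (hXs hy')

/-- A triangular intersecting family with at least two members has transversal number
exactly `⌈|F|/2⌉`. -/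
theorem triangular_transversal_eq {α : Type*} [DecidableEq α]
    (F : Finset (Finset α)) (h2 : 2 ≤ F.card)
    (hint : ∀ A ∈ F, ∀ B ∈ F, (A ∩ B).Nonempty)
    (htri : ∀ A ∈ F, ∀ B ∈ F, ∀ C ∈ F, A ≠ B → A ≠ C → B ≠ C → A ∩ B ∩ C = ∅) :
    (∃ X : Finset α, (∀ A ∈ F, (X ∩ A).Nonempty) ∧ X.card = (F.card + 1) / 2) ∧
    (∀ X : Finset α, (∀ A ∈ F, (X ∩ A).Nonempty) → (F.card + 1) / 2 ≤ X.card) := by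
  constructor
  · obtain ⟨X, h1, h2', _⟩ := exists_transversal_aux F hint htri
    exact ⟨X, h1, h2'⟩
  · intro X hX
    classical
    have hne : F.Nonempty := Finset.card_pos.mp (by omega)
    obtain ⟨A0, hA0⟩ := hne
    let f : Finset α → α := fun A =>
      if h : (X ∩ A).Nonempty then h.choose else (hX A0 hA0).choose
    have hf : ∀ A ∈ F, f A ∈ X ∩ A := by
      intro A hA
      simp only [f, dif_pos (hX A hA)]
      exact (hX A hA).choose_spec
    have key : F.card ≤ 2 * (F.image f).card := by
      apply Finset.card_le_mul_card_image
      intro a _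
      by_contra hcon
      push_neg at hcon
      obtain ⟨A, B, C, hA', hB', hC', hAB, hAC, hBC⟩ :=
        Finset.two_lt_card_iff.mp hcon
      rw [Finset.mem_filter] at hA' hB' hC'
      have h0 := htri A hA'.1 B hB'.1 C hC'.1 hAB hAC hBC
      have haA : a ∈ A := hA'.2 ▸ (Finset.mem_inter.mp (hf A hA'.1)).2
      have haB : a ∈ B := hB'.2 ▸ (Finset.mem_inter.mp (hf B hB'.1)).2
      have haC : a ∈ C := hC'.2 ▸ (Finset.mem_inter.mp (hf C hC'.1)).2
      have : a ∈ A ∩ B ∩ C := by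
        simp only [Finset.mem_inter]; exact ⟨⟨haA, haB⟩, haC⟩
      rw [h0] at this
      exact absurd this (Finset.notMem_empty a)
    have himg : F.image f ⊆ X := by
      intro y hy
      obtain ⟨A, hA, rfl⟩ := Finset.mem_image.mp hy
      exact (Finset.mem_inter.mp (hf A hA)).1
    have := Finset.card_le_card himg
    omega
end

section
/- If F is an intersecting family of 2k−1 distinct sets with transversal number exactly k, then F is triangular; equivalently, every element of the ground set lies in at most 2 members of F. -/
lemma half_transversal {α : Type*} [DecidableEq α] :
    ∀ n (G : Finset (Finset α)), G.card = n →
    (∀ A ∈ G, ∀ B ∈ G, (A ∩ B).Nonempty) →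
    ∃ Y : Finset α, (∀ A ∈ G, (Y ∩ A).Nonempty) ∧ Y.card ≤ (n + 1) / 2 := by
  intro n
  induction n using Nat.strong_induction_on with
  | _ n ih =>
    intro G hcard hint
    rcases G.eq_empty_or_nonempty with rfl | ⟨A, hA⟩
    · exact ⟨∅, by simp, by simp⟩
    rcases (G.erase A).eq_empty_or_nonempty with he | ⟨B, hB⟩
    · obtain ⟨a, ha⟩ := hint A hA A hA
      simp only [Finset.mem_inter] at ha
      refine ⟨{a}, ?_, ?_⟩
      · intro A' hA'
        have : A' = A := by
          by_contra hne
          exact absurd (Finset.mem_erase.mpr ⟨hne, hA'⟩) (by simp [he])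
        subst this
        exact ⟨a, Finset.mem_inter.mpr ⟨Finset.mem_singleton_self a, ha.1⟩⟩
      · have hn : 1 ≤ n := by
          rw [← hcard]; exact Finset.card_pos.mpr ⟨A, hA⟩
        simp
        omega
    · have hBG : B ∈ G := Finset.mem_of_mem_erase hB
      have hBA : B ≠ A := (Finset.mem_erase.mp hB).1
      obtain ⟨y, hy⟩ := hint A hA B hBG
      simp only [Finset.mem_inter] at hy
      set G' := (G.erase A).erase B with hG'
      have hcard' : G'.card = n - 2 := by
        rw [hG', Finset.card_erase_of_mem hB, Finset.card_erase_of_mem hA, hcard]; omega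
      have hn2 : 2 ≤ n := by
        have h1 : 1 ≤ (G.erase A).card := Finset.card_pos.mpr ⟨B, hB⟩
        have := Finset.card_erase_of_mem hA
        omega
      obtain ⟨Y', hY', hYc⟩ := ih (n - 2) (by omega) G' hcard'
        (fun A' hA' B' hB' => hint A' (Finset.mem_of_mem_erase (Finset.mem_of_mem_erase hA'))
          B' (Finset.mem_of_mem_erase (Finset.mem_of_mem_erase hB')))
      refine ⟨insert y Y', ?_, ?_⟩
      · intro A' hA'
        by_cases h1 : A' = A
        · exact ⟨y, Finset.mem_inter.mpr ⟨Finset.mem_insert_self y Y', h1 ▸ hy.1⟩⟩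
        by_cases h2 : A' = B
        · exact ⟨y, Finset.mem_inter.mpr ⟨Finset.mem_insert_self y Y', h2 ▸ hy.2⟩⟩
        have : A' ∈ G' := Finset.mem_erase.mpr ⟨h2, Finset.mem_erase.mpr ⟨h1, hA'⟩⟩
        obtain ⟨z, hz⟩ := hY' A' this
        simp only [Finset.mem_inter] at hz
        exact ⟨z, Finset.mem_inter.mpr ⟨Finset.mem_insert_of_mem hz.1, hz.2⟩⟩
      · have := Finset.card_insert_le y Y'
        omega

/-- An intersecting family of `2k - 1` sets with transversal number exactly `k`
is triangular, i.e. every element lies in at most two of its members. -/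
theorem odd_family_triangular {α : Type*} [DecidableEq α]
    (F : Finset (Finset α)) (k : ℕ) (hk : 1 ≤ k)
    (hcard : F.card = 2 * k - 1) (hmem : ∀ A ∈ F, A.Nonempty)
    (hint : ∀ A ∈ F, ∀ B ∈ F, (A ∩ B).Nonempty)
    (htrans : ∃ X : Finset α, (∀ A ∈ F, (X ∩ A).Nonempty) ∧ X.card = k)
    (htransmin : ∀ X : Finset α, (∀ A ∈ F, (X ∩ A).Nonempty) → k ≤ X.card) :
    ∀ x : α, (F.filter fun A => x ∈ A).card ≤ 2 := by
  intro x
  by_contra h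
  push_neg at h
  have ht3 : 3 ≤ (F.filter fun A => x ∈ A).card := h
  set G := F.filter fun A => x ∉ A with hG
  have hsplit : (F.filter fun A => x ∈ A).card + G.card = F.card :=
    Finset.card_filter_add_card_filter_not (p := fun A => x ∈ A)
  have htle : (F.filter fun A => x ∈ A).card ≤ F.card := Finset.card_filter_le _ _
  have hk2 : 2 ≤ k := by omega
  have hGcard : G.card ≤ 2 * k - 4 := by omega
  obtain ⟨Y, hY, hYc⟩ := half_transversal G.card G rfl
    (fun A hA B hB => hint A (Finset.mem_of_mem_filter A hA) B (Finset.mem_of_mem_filter B hB))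
  have hcover : ∀ A ∈ F, ((insert x Y) ∩ A).Nonempty := by
    intro A hA
    by_cases hx : x ∈ A
    · exact ⟨x, Finset.mem_inter.mpr ⟨Finset.mem_insert_self x Y, hx⟩⟩
    · obtain ⟨z, hz⟩ := hY A (Finset.mem_filter.mpr ⟨hA, hx⟩)
      simp only [Finset.mem_inter] at hz
      exact ⟨z, Finset.mem_inter.mpr ⟨Finset.mem_insert_of_mem hz.1, hz.2⟩⟩
  have hmin := htransmin (insert x Y) hcover
  have hins := Finset.card_insert_le x Y
  omega
end

section
/- In the projective plane of prime power order q, the transversal number of the family of all lines equals q + 1. -/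
open Configuration

/-- In a projective plane of prime power order `q`, the transversal number of the
family of all lines is exactly `q + 1`. -/
theorem projPlane_transversal {P L : Type*} [Membership P L] [ProjectivePlane P L]
    [Fintype P] [Fintype L] (q : ℕ) (hq : IsPrimePow q)
    (hord : ProjectivePlane.order P L = q) :
    (∃ X : Finset P, (∀ l : L, ∃ p ∈ X, p ∈ l) ∧ X.card = q + 1) ∧
    (∀ X : Finset P, (∀ l : L, ∃ p ∈ X, p ∈ l) → q + 1 ≤ X.card) := by
  classical
  constructor
  · -- existence: take the points of an arbitrary line
    obtain ⟨p₁, p₂, p₃, l₁, l₂, l₃, -⟩ := @ProjectivePlane.exists_config P L _ _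
    refine ⟨Set.toFinset {p : P | p ∈ l₁}, ?_, ?_⟩
    · intro l
      by_cases h : l = l₁
      · subst h
        have hcard : pointCount P l = q + 1 := by
          rw [ProjectivePlane.pointCount_eq, hord]
        have hpos : 0 < Nat.card {p : P // p ∈ l} := by
          rw [show Nat.card {p : P // p ∈ l} = pointCount P l from rfl, hcard]; omega
        obtain ⟨p, hp⟩ := (Nat.card_pos_iff.mp hpos).1
        exact ⟨p, Set.mem_toFinset.mpr hp, hp⟩
      · obtain ⟨hm1, hm2⟩ := HasPoints.mkPoint_ax (P := P) (L := L) h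
        exact ⟨_, Set.mem_toFinset.mpr hm2, hm1⟩
    · rw [Set.toFinset_card]
      have : Fintype.card {p : P // p ∈ l₁} = pointCount P l₁ := by
        rw [pointCount, Nat.card_eq_fintype_card]
      rw [show Fintype.card ({p : P | p ∈ l₁} : Set P) = Fintype.card {p : P // p ∈ l₁} from rfl,
        this, ProjectivePlane.pointCount_eq, hord]
  · -- lower bound
    intro X hX
    by_contra hlt
    push_neg at hlt
    have hXq : X.card ≤ q := by omega
    -- there is a point outside X
    have hcardP : Fintype.card P = q ^ 2 + q + 1 := by
      rw [ProjectivePlane.card_points P L, hord]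
    have hex : ∃ p : P, p ∉ X := by
      by_contra h
      push_neg at h
      have : Fintype.card P ≤ X.card := by
        have : (Finset.univ : Finset P) ⊆ X := fun p _ => h p
        simpa using Finset.card_le_card this
      nlinarith
    obtain ⟨p, hp⟩ := hex
    -- every line through p contains a point of X, injectively
    have choice : ∀ l : {l : L // p ∈ l}, ∃ x : X, (x : P) ∈ (l : L) := by
      rintro ⟨l, -⟩
      obtain ⟨x, hx, hxl⟩ := hX l
      exact ⟨⟨x, hx⟩, hxl⟩
    choose f hf using choice
    have hinj : Function.Injective f := by
      rintro ⟨l₁, hl₁⟩ ⟨l₂, hl₂⟩ hfe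
      have hx₁ := hf ⟨l₁, hl₁⟩
      have hx₂ := hf ⟨l₂, hl₂⟩
      rw [hfe] at hx₁
      have hne : p ≠ (f ⟨l₂, hl₂⟩ : P) := fun h => hp (h ▸ (f ⟨l₂, hl₂⟩).2)
      rcases Nondegenerate.eq_or_eq (P := P) (L := L) hl₁ hx₁ hl₂ hx₂ with h | h
      · exact absurd h hne
      · exact Subtype.ext h
    have hcount : lineCount L p = q + 1 := by
      rw [ProjectivePlane.lineCount_eq, hord]
    have hle : lineCount L p ≤ X.card := by
      rw [lineCount, Nat.card_eq_fintype_card]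
      calc Fintype.card {l : L // p ∈ l} ≤ Fintype.card X := Fintype.card_le_of_injective f hinj
        _ = X.card := Fintype.card_coe X
    omega
end

section
/- For any odd prime power q, the maximum size of a triangular subfamily of the lines of the projective plane PG(2,q) is exactly q + 1; that is, there exist q + 1 lines such that no point lies on three of them, but no such collection of q + 2 lines exists. -/
/-- Points of the standard model of `PG(2,q)` over a field `K`: affine points `(x,y)`,
points at infinity `(ω, m)` for slopes `m`, and the point `(ω, ω)`. The same type
indexes the lines. -/
abbrev PGPoint (K : Type*) := (K × K) ⊕ K ⊕ Unit

def pgLine {K : Type*} [Field K] [Fintype K] [DecidableEq K] :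
    PGPoint K → Finset (PGPoint K)
  | Sum.inl (m, b) =>
      (Finset.univ.image fun x : K => (Sum.inl (x, m * x + b) : PGPoint K)) ∪
        {Sum.inr (Sum.inl m)}
  | Sum.inr (Sum.inl b) =>
      (Finset.univ.image fun y : K => (Sum.inl (b, y) : PGPoint K)) ∪
        {Sum.inr (Sum.inr ())}
  | Sum.inr (Sum.inr _) =>
      (Finset.univ.image fun y : K => (Sum.inr (Sum.inl y) : PGPoint K)) ∪
        {Sum.inr (Sum.inr ())}

/-!
Two distinct lines of `PG(2,q)` meet in exactly one point. Hence if `S` is triangular and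
`ℓ ∈ S`, each other line of `S` meets `ℓ` in one point and no point of `ℓ` is met twice, so
`|S| - 1 ≤ q + 1`. If `|S| = q + 2`, every point on a line of `S`
lies on exactly two lines of `S`; counting the lines of `S` through the points of a line
outside `S` then shows that `|S|` is even, impossible for odd `q`.

For the lower bound, when `2 ≠ 0` the `q` tangents `y = 2tx - t²` of the parabola `y = x²`
together with the line at infinity form a triangular family: an affine point `(x, y)` lies on
the tangents at the roots of `t² - 2xt + y`, and the slope `2t` determines `t`.
-/

open Finset

lemma card_add_two_lt_card_pgPoint (K : Type*) [Fintype K] [Nontrivial K] :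
    Fintype.card K + 2 < Fintype.card (PGPoint K) := by
  have := Fintype.one_lt_card (α := K)
  simp only [Fintype.card_sum, Fintype.card_prod, Fintype.card_unit]
  nlinarith

lemma two_ne_zero_of_odd_card {K : Type*} [Field K] [Fintype K] (hodd : Odd (Fintype.card K)) :
    (2 : K) ≠ 0 :=
  Ring.two_ne_zero fun h => Nat.not_even_iff_odd.2 hodd
    (Nat.even_iff.2 (FiniteField.even_card_of_char_two h))

section

variable {K : Type*} [Field K] [Fintype K] [DecidableEq K]

section Incidence

variable {x y m b c s : K} {u : Unit}

@[simp] lemma inl_mem_pgLine_inl : (Sum.inl (x, y) : PGPoint K) ∈ pgLine (Sum.inl (m, b)) ↔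
    m * x + b = y := by
  simp [pgLine]

@[simp] lemma inr_inl_mem_pgLine_inl :
    (Sum.inr (Sum.inl s) : PGPoint K) ∈ pgLine (Sum.inl (m, b)) ↔ s = m := by
  simp [pgLine]

@[simp] lemma inr_inr_notMem_pgLine_inl :
    (Sum.inr (Sum.inr u) : PGPoint K) ∉ pgLine (Sum.inl (m, b)) := by
  simp [pgLine]

@[simp] lemma inl_mem_pgLine_inr_inl :
    (Sum.inl (x, y) : PGPoint K) ∈ pgLine (Sum.inr (Sum.inl c)) ↔ c = x := by
  simp [pgLine]

@[simp] lemma inr_inl_notMem_pgLine_inr_inl :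
    (Sum.inr (Sum.inl s) : PGPoint K) ∉ pgLine (Sum.inr (Sum.inl c)) := by
  simp [pgLine]

@[simp] lemma inr_inr_mem_pgLine_inr_inl :
    (Sum.inr (Sum.inr u) : PGPoint K) ∈ pgLine (Sum.inr (Sum.inl c)) := by
  simp [pgLine]

@[simp] lemma inl_notMem_pgLine_inr_inr :
    (Sum.inl (x, y) : PGPoint K) ∉ pgLine (Sum.inr (Sum.inr u)) := by
  simp [pgLine]

@[simp] lemma inr_mem_pgLine_inr_inr {p : K ⊕ Unit} :
    (Sum.inr p : PGPoint K) ∈ pgLine (Sum.inr (Sum.inr u)) := by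
  cases p <;> simp [pgLine]

end Incidence

def pgMeet : PGPoint K → PGPoint K → PGPoint K
  | Sum.inl (m, b), Sum.inl (m', b') =>
      if m = m' then Sum.inr (Sum.inl m)
      else Sum.inl ((b' - b) / (m - m'), m * ((b' - b) / (m - m')) + b)
  | Sum.inl (m, b), Sum.inr (Sum.inl c) => Sum.inl (c, m * c + b)
  | Sum.inl (m, _), Sum.inr (Sum.inr _) => Sum.inr (Sum.inl m)
  | Sum.inr (Sum.inl c), Sum.inl (m, b) => Sum.inl (c, m * c + b)
  | Sum.inr (Sum.inl _), Sum.inr _ => Sum.inr (Sum.inr ())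
  | Sum.inr (Sum.inr _), Sum.inl (m, _) => Sum.inr (Sum.inl m)
  | Sum.inr (Sum.inr _), Sum.inr _ => Sum.inr (Sum.inr ())

lemma pgMeet_mem_left (l l' : PGPoint K) : pgMeet l l' ∈ pgLine l := by
  rcases l with ⟨m, b⟩ | c | u <;> rcases l' with ⟨m', b'⟩ | c' | u' <;> simp [pgMeet]
  split <;> simp [*]

lemma pgMeet_mem_right (l l' : PGPoint K) : pgMeet l l' ∈ pgLine l' := by
  rcases l with ⟨m, b⟩ | c | u <;> rcases l' with ⟨m', b'⟩ | c' | u' <;> simp [pgMeet]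
  split_ifs with h
  · simp [h]
  · simp only [inl_mem_pgLine_inl]
    field_simp [sub_ne_zero.2 h]
    ring

lemma eq_pgMeet {l l' p : PGPoint K} (hne : l ≠ l') (hp : p ∈ pgLine l) (hp' : p ∈ pgLine l') :
    p = pgMeet l l' := by
  rcases l with ⟨m, b⟩ | c | u <;> rcases l' with ⟨m', b'⟩ | c' | u' <;>
    rcases p with ⟨x, y⟩ | s | v <;> simp_all [pgMeet]
  split_ifs with hm
  · subst hm
    exact hne rfl (by linear_combination hp - hp')
  · have hx : x = (b' - b) / (m - m') := by
      field_simp [sub_ne_zero.2 hm]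
      linear_combination hp - hp'
    simp [hx, ← hp]

lemma pgLine_inter_pgLine {l l' : PGPoint K} (hne : l ≠ l') :
    pgLine l ∩ pgLine l' = {pgMeet l l'} := by
  ext p
  simp only [mem_inter, mem_singleton]
  refine ⟨fun ⟨hp, hp'⟩ => eq_pgMeet hne hp hp', ?_⟩
  rintro rfl
  exact ⟨pgMeet_mem_left l l', pgMeet_mem_right l l'⟩

lemma card_pgLine (l : PGPoint K) : #(pgLine l) = Fintype.card K + 1 := by
  rcases l with ⟨m, b⟩ | c | u <;>
    rw [pgLine, card_union_of_disjoint (by simp), card_image_of_injective, card_univ,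
      card_singleton] <;>
    intro x x' h <;> simp_all

def linesThrough (S : Finset (PGPoint K)) (p : PGPoint K) : Finset (PGPoint K) :=
  S.filter fun l => p ∈ pgLine l

def IsTriangular (S : Finset (PGPoint K)) : Prop :=
  ∀ p, #(linesThrough S p) ≤ 2

lemma sum_card_linesThrough {T : Finset (PGPoint K)} {ℓ : PGPoint K} (hℓ : ℓ ∉ T) :
    ∑ p ∈ pgLine ℓ, #(linesThrough T p) = #T := by
  have := sum_card_bipartiteAbove_eq_sum_card_bipartiteBelow (fun p l => p ∈ pgLine l)
    (s := pgLine ℓ) (t := T)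
  simp only [bipartiteAbove, bipartiteBelow, filter_mem_eq_inter] at this
  simp only [linesThrough]
  rw [this, card_eq_sum_ones]
  refine sum_congr rfl fun l hl => ?_
  rw [pgLine_inter_pgLine (ne_of_mem_of_not_mem hl hℓ).symm, card_singleton]

lemma card_linesThrough_erase {S : Finset (PGPoint K)} {ℓ p : PGPoint K} (hℓ : ℓ ∈ S)
    (hp : p ∈ pgLine ℓ) : #(linesThrough (S.erase ℓ) p) = #(linesThrough S p) - 1 := by
  rw [linesThrough, filter_erase, card_erase_of_mem (mem_filter.2 ⟨hℓ, hp⟩), linesThrough]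

namespace IsTriangular

variable {S : Finset (PGPoint K)} {ℓ : PGPoint K}

lemma card_linesThrough_erase_le_one (hS : IsTriangular S) (hℓ : ℓ ∈ S) {p : PGPoint K}
    (hp : p ∈ pgLine ℓ) : #(linesThrough (S.erase ℓ) p) ≤ 1 := by
  have := hS p
  rw [card_linesThrough_erase hℓ hp]
  omega

lemma card_le (hS : IsTriangular S) : #S ≤ Fintype.card K + 2 := by
  obtain rfl | ⟨ℓ, hℓ⟩ := S.eq_empty_or_nonempty
  · simp
  have := calc #(S.erase ℓ)
      = ∑ p ∈ pgLine ℓ, #(linesThrough (S.erase ℓ) p) :=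
        (sum_card_linesThrough (notMem_erase ℓ S)).symm
    _ ≤ ∑ p ∈ pgLine ℓ, 1 := sum_le_sum fun p hp => hS.card_linesThrough_erase_le_one hℓ hp
    _ = Fintype.card K + 1 := by rw [← card_eq_sum_ones, card_pgLine]
  rw [card_erase_of_mem hℓ] at this
  omega

lemma card_linesThrough_eq_two (hS : IsTriangular S) (hcard : #S = Fintype.card K + 2)
    (hℓ : ℓ ∈ S) {p : PGPoint K} (hp : p ∈ pgLine ℓ) : #(linesThrough S p) = 2 := by
  have hsum : ∑ p ∈ pgLine ℓ, #(linesThrough (S.erase ℓ) p) = ∑ p ∈ pgLine ℓ, 1 := by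
    rw [sum_card_linesThrough (notMem_erase ℓ S), card_erase_of_mem hℓ, hcard,
      ← card_eq_sum_ones, card_pgLine]
    omega
  have hone :=
    (sum_eq_sum_iff_of_le fun p hp => hS.card_linesThrough_erase_le_one hℓ hp).1 hsum p hp
  have := hS p
  rw [card_linesThrough_erase hℓ hp] at hone
  omega

lemma even_card (hS : IsTriangular S) (hcard : #S = Fintype.card K + 2) : Even #S := by
  obtain ⟨ℓ, -, hℓ⟩ := exists_mem_notMem_of_card_lt_card
    (hcard ▸ card_add_two_lt_card_pgPoint K : #S < #(univ : Finset (PGPoint K)))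
  rw [← sum_card_linesThrough hℓ]
  refine even_sum _ fun p _ => ?_
  obtain h | ⟨l, hl⟩ := (linesThrough S p).eq_empty_or_nonempty
  · simp [h]
  · obtain ⟨hlS, hpl⟩ := mem_filter.1 hl
    rw [hS.card_linesThrough_eq_two hcard hlS hpl]
    exact even_two

lemma card_le_of_odd (hS : IsTriangular S) (hodd : Odd (Fintype.card K)) :
    #S ≤ Fintype.card K + 1 := by
  obtain h | h := hS.card_le.lt_or_eq
  · omega
  · exact absurd (hS.even_card h) (Nat.not_even_iff_odd.2 (h ▸ hodd.add_even even_two))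

end IsTriangular

end

section

variable {K : Type*} [Field K]

-- The tangent to the parabola `y = x²` at `(t, t²)`.
def tangentLine (t : K) : PGPoint K := Sum.inl (2 * t, -(t * t))

lemma tangentLine_injective (h2 : (2 : K) ≠ 0) : Function.Injective (tangentLine (K := K)) := by
  intro t t' h
  exact mul_left_cancel₀ h2 (congrArg Prod.fst (Sum.inl.inj h))

variable [Fintype K] [DecidableEq K]

variable (K) in
def tangentLines : Finset (PGPoint K) :=
  insert (Sum.inr (Sum.inr ())) (univ.image tangentLine)

lemma card_tangentLines (h2 : (2 : K) ≠ 0) : #(tangentLines K) = Fintype.card K + 1 := by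
  rw [tangentLines, card_insert_of_notMem (by simp [tangentLine]),
    card_image_of_injective _ (tangentLine_injective h2), card_univ]

@[simp] lemma mem_tangentLines {l : PGPoint K} :
    l ∈ tangentLines K ↔ l = Sum.inr (Sum.inr ()) ∨ ∃ t, tangentLine t = l := by
  simp [tangentLines]

lemma exists_linesThrough_tangentLines_subset (h2 : (2 : K) ≠ 0) (p : PGPoint K) :
    ∃ a b, linesThrough (tangentLines K) p ⊆ {a, b} := by
  simp only [subset_iff, linesThrough, mem_filter, mem_tangentLines, mem_insert, mem_singleton]
  rcases p with ⟨x, y⟩ | s | u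
  · by_cases h : ∃ t₀, 2 * t₀ * x + -(t₀ * t₀) = y
    · obtain ⟨t₀, ht₀⟩ := h
      refine ⟨tangentLine t₀, tangentLine (2 * x - t₀), ?_⟩
      rintro l ⟨rfl | ⟨t, rfl⟩, hl⟩
      · simp at hl
      · simp only [tangentLine, inl_mem_pgLine_inl] at hl
        have : (t - t₀) * (t - (2 * x - t₀)) = 0 := by linear_combination ht₀ - hl
        rcases mul_eq_zero.1 this with h | h
        · exact Or.inl (by rw [sub_eq_zero.1 h])
        · exact Or.inr (by rw [sub_eq_zero.1 h])
    · refine ⟨tangentLine 0, tangentLine 0, ?_⟩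
      rintro l ⟨rfl | ⟨t, rfl⟩, hl⟩
      · simp at hl
      · simp only [tangentLine, inl_mem_pgLine_inl] at hl
        exact absurd ⟨t, hl⟩ h
  · refine ⟨Sum.inr (Sum.inr ()), tangentLine (s / 2), ?_⟩
    rintro l ⟨rfl | ⟨t, rfl⟩, hl⟩
    · exact Or.inl rfl
    · simp only [tangentLine, inr_inl_mem_pgLine_inl] at hl
      exact Or.inr (by rw [hl, mul_div_cancel_left₀ t h2])
  · refine ⟨Sum.inr (Sum.inr ()), Sum.inr (Sum.inr ()), ?_⟩
    rintro l ⟨rfl | ⟨t, rfl⟩, hl⟩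
    · exact Or.inl rfl
    · simp [tangentLine] at hl

lemma isTriangular_tangentLines (h2 : (2 : K) ≠ 0) : IsTriangular (tangentLines K) := fun p => by
  obtain ⟨a, b, h⟩ := exists_linesThrough_tangentLines_subset h2 p
  exact (card_le_card h).trans card_le_two

end

theorem pg_triangular_odd_general {K : Type*} [Field K] [Fintype K] [DecidableEq K]
    (q : ℕ) (hodd : Odd q) (hcard : Fintype.card K = q) :
    (∃ S : Finset (PGPoint K), S.card = q + 1 ∧
      ∀ p : PGPoint K, (S.filter fun l => p ∈ pgLine l).card ≤ 2) ∧
    (∀ S : Finset (PGPoint K),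
      (∀ p : PGPoint K, (S.filter fun l => p ∈ pgLine l).card ≤ 2) →
      S.card ≤ q + 1) := by
  subst hcard
  have h2 := two_ne_zero_of_odd_card hodd
  exact ⟨⟨tangentLines K, card_tangentLines h2, isTriangular_tangentLines h2⟩,
    fun S hS => IsTriangular.card_le_of_odd hS hodd⟩

/-- For odd prime power `q`, the maximum size of a triangular family of lines of
`PG(2,q)` (no point on three of the lines) is exactly `q + 1`. -/
theorem pg_triangular_odd {K : Type*} [Field K] [Fintype K] [DecidableEq K]
    (q : ℕ) (hq : IsPrimePow q) (hodd : Odd q) (hcard : Fintype.card K = q) :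
    (∃ S : Finset (PGPoint K), S.card = q + 1 ∧
      ∀ p : PGPoint K, (S.filter fun l => p ∈ pgLine l).card ≤ 2) ∧
    (∀ S : Finset (PGPoint K),
      (∀ p : PGPoint K, (S.filter fun l => p ∈ pgLine l).card ≤ 2) →
      S.card ≤ q + 1) :=
  pg_triangular_odd_general q hodd hcard
end

section
/- For q = 2^t a power of two, the maximum size of a triangular subfamily of the lines of PG(2,q) is exactly q + 2; that is, there exist q + 2 lines of the Desarguesian plane of order q such that every point lies on at most two of them. -/
lemma card_le_two_of_sub {α : Type*} [DecidableEq α] (s : Finset α) (u v : α)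
    (h : ∀ a ∈ s, a = u ∨ a = v) : s.card ≤ 2 := by
  have hsub : s ⊆ {u, v} := by
    intro a ha; rcases h a ha with rfl | rfl <;> simp
  calc s.card ≤ ({u, v} : Finset α).card := Finset.card_le_card hsub
    _ ≤ 2 := Finset.card_insert_le u {v} |>.trans (by simp)

section
variable {K : Type*} [Field K] [Fintype K] [DecidableEq K]

lemma pgLine_card (l : PGPoint K) : (pgLine l).card = Fintype.card K + 1 := by
  obtain ⟨m, b⟩ | c | u := l
  · rw [pgLine, Finset.card_union_of_disjoint (by simp), Finset.card_image_of_injective _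
      (fun a b h => by simp only [Sum.inl.injEq, Prod.mk.injEq] at h; exact h.1),
      Finset.card_univ, Finset.card_singleton]
  · rw [pgLine, Finset.card_union_of_disjoint (by simp), Finset.card_image_of_injective _
      (fun a b h => by simp only [Sum.inl.injEq, Prod.mk.injEq] at h; exact h.2),
      Finset.card_univ, Finset.card_singleton]
  · rw [pgLine, Finset.card_union_of_disjoint (by simp), Finset.card_image_of_injective _
      (fun a b h => by simpa using h), Finset.card_univ, Finset.card_singleton]

lemma pgLine_meet (l l' : PGPoint K) : ∃ p, p ∈ pgLine l ∧ p ∈ pgLine l' := by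
  obtain ⟨m, b⟩ | c | u := l <;> obtain ⟨m', b'⟩ | c' | u' := l'
  · by_cases hm : m = m'
    · exact ⟨Sum.inr (Sum.inl m), by simp [pgLine], by simp [pgLine, hm]⟩
    · refine ⟨Sum.inl ((b' - b) / (m - m'), m * ((b' - b) / (m - m')) + b),
        by simp [pgLine], ?_⟩
      have hne : m - m' ≠ 0 := sub_ne_zero.mpr hm
      simp only [pgLine, Finset.mem_union, Finset.mem_image, Finset.mem_univ, true_and]
      left
      refine ⟨(b' - b) / (m - m'), ?_⟩
      field_simp
      ring
  · exact ⟨Sum.inl (c', m * c' + b), by simp [pgLine], by simp [pgLine]⟩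
  · exact ⟨Sum.inr (Sum.inl m), by simp [pgLine], by simp [pgLine]⟩
  · exact ⟨Sum.inl (c, m' * c + b'), by simp [pgLine], by simp [pgLine]⟩
  · exact ⟨Sum.inr (Sum.inr ()), by simp [pgLine], by simp [pgLine]⟩
  · exact ⟨Sum.inr (Sum.inr ()), by simp [pgLine], by simp [pgLine]⟩
  · exact ⟨Sum.inr (Sum.inl m'), by simp [pgLine], by simp [pgLine]⟩
  · exact ⟨Sum.inr (Sum.inr ()), by simp [pgLine], by simp [pgLine]⟩
  · exact ⟨Sum.inr (Sum.inr ()), by simp [pgLine], by simp [pgLine]⟩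

end

/-- For `q = 2^t`, the maximum size of a triangular family of lines of `PG(2,q)`
(every point on at most two of the lines) is exactly `q + 2`. -/
theorem pg_triangular_even {K : Type*} [Field K] [Fintype K] [DecidableEq K]
    (t : ℕ) (hcard : Fintype.card K = 2 ^ t) :
    (∃ S : Finset (PGPoint K), S.card = 2 ^ t + 2 ∧
      ∀ p : PGPoint K, (S.filter fun l => p ∈ pgLine l).card ≤ 2) ∧
    (∀ S : Finset (PGPoint K),
      (∀ p : PGPoint K, (S.filter fun l => p ∈ pgLine l).card ≤ 2) →
      S.card ≤ 2 ^ t + 2) := by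
  classical
  -- characteristic 2
  have h2 : (2 : K) = 0 := by
    have hc : ((Fintype.card K : K)) = 0 := FiniteField.cast_card_eq_zero K
    rw [hcard] at hc
    push_cast at hc
    rcases Nat.eq_zero_or_pos t with rfl | ht
    · exfalso; have := Fintype.one_lt_card (α := K); omega
    · exact pow_eq_zero_iff ht.ne' |>.mp hc
  constructor
  · -- existence: dual hyperoval
    refine ⟨(Finset.univ.image fun c : K => (Sum.inl (c, c * c) : PGPoint K)) ∪
      {Sum.inr (Sum.inl 0), Sum.inr (Sum.inr ())}, ?_, ?_⟩
    · rw [Finset.card_union_of_disjoint (by simp), Finset.card_image_of_injective _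
        (fun a b h => by simp only [Sum.inl.injEq, Prod.mk.injEq] at h; exact h.1),
        Finset.card_univ, hcard]
      simp
    · intro p
      set S := (Finset.univ.image fun c : K => (Sum.inl (c, c * c) : PGPoint K)) ∪
        {Sum.inr (Sum.inl 0), Sum.inr (Sum.inr ())} with hS
      have memS : ∀ l ∈ S, (∃ c : K, l = Sum.inl (c, c * c)) ∨ l = Sum.inr (Sum.inl 0) ∨
          l = Sum.inr (Sum.inr ()) := by
        intro l hl
        simp only [hS, Finset.mem_union, Finset.mem_image, Finset.mem_univ, true_and,
          Finset.mem_insert, Finset.mem_singleton] at hl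
        tauto
      obtain ⟨x, y⟩ | m | u := p
      · -- affine point
        by_cases hx : x = 0
        · subst hx
          by_cases hy : ∃ c : K, c * c = y
          · obtain ⟨c0, hc0⟩ := hy
            apply card_le_two_of_sub _ (Sum.inl (c0, c0 * c0)) (Sum.inr (Sum.inl 0))
            intro l hl
            rw [Finset.mem_filter] at hl
            obtain ⟨hlS, hlp⟩ := hl
            rcases memS l hlS with ⟨c, rfl⟩ | rfl | rfl
            · left
              simp only [pgLine, Finset.mem_union, Finset.mem_image, Finset.mem_univ,
                true_and, Finset.mem_singleton] at hlp
              rcases hlp with ⟨a, ha⟩ | h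
              · obtain ⟨ha1, ha2⟩ := by simpa using ha
                -- c * a + c*c = y with a = 0
                have hcy : c * c = y := by rw [← ha2, ha1]; ring
                have hcc0 : c = c0 := by
                  have hmul : (c - c0) * (c + c0) = 0 := by
                    linear_combination hcy - hc0
                  rcases mul_eq_zero.mp hmul with h' | h'
                  · linear_combination h'
                  · linear_combination h' - c0 * h2
                rw [hcc0]
              · simp at h
            · right; rfl
            · exfalso
              simp [pgLine] at hlp
          · apply card_le_two_of_sub _ (Sum.inr (Sum.inl 0)) (Sum.inr (Sum.inl 0))
            intro l hl
            rw [Finset.mem_filter] at hl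
            obtain ⟨hlS, hlp⟩ := hl
            rcases memS l hlS with ⟨c, rfl⟩ | rfl | rfl
            · exfalso
              simp only [pgLine, Finset.mem_union, Finset.mem_image, Finset.mem_univ,
                true_and, Finset.mem_singleton] at hlp
              rcases hlp with ⟨a, ha⟩ | h
              · obtain ⟨ha1, ha2⟩ := by simpa using ha
                exact hy ⟨c, by rw [← ha2, ha1]; ring⟩
              · simp at h
            · left; rfl
            · exfalso; simp [pgLine] at hlp
        · -- x ≠ 0
          by_cases hy : ∃ c : K, c * x + c * c = y
          · obtain ⟨c0, hc0⟩ := hy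
            apply card_le_two_of_sub _ (Sum.inl (c0, c0 * c0))
              (Sum.inl (c0 + x, (c0 + x) * (c0 + x)))
            intro l hl
            rw [Finset.mem_filter] at hl
            obtain ⟨hlS, hlp⟩ := hl
            rcases memS l hlS with ⟨c, rfl⟩ | rfl | rfl
            · simp only [pgLine, Finset.mem_union, Finset.mem_image, Finset.mem_univ,
                true_and, Finset.mem_singleton] at hlp
              rcases hlp with ⟨a, ha⟩ | h
              · obtain ⟨ha1, ha2⟩ := by simpa using ha
                have hcy : c * x + c * c = y := by subst ha1; exact ha2
                have hmul : (c - c0) * (c - (c0 + x)) = 0 := by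
                  linear_combination hcy - hc0 + (c0 * c0 + c0 * x - c * c0 - c * x) * h2
                rcases mul_eq_zero.mp hmul with h' | h'
                · left; rw [sub_eq_zero.mp h']
                · right; rw [sub_eq_zero.mp h']
              · simp at h
            · exfalso
              simp only [pgLine, Finset.mem_union, Finset.mem_image, Finset.mem_univ,
                true_and, Finset.mem_singleton] at hlp
              rcases hlp with ⟨a, ha⟩ | h
              · obtain ⟨ha1, -⟩ := by simpa using ha
                exact hx ha1.symm
              · simp at h
            · exfalso; simp [pgLine] at hlp
          · apply card_le_two_of_sub _ (Sum.inr (Sum.inl 0)) (Sum.inr (Sum.inl 0))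
            intro l hl
            rw [Finset.mem_filter] at hl
            obtain ⟨hlS, hlp⟩ := hl
            exfalso
            rcases memS l hlS with ⟨c, rfl⟩ | rfl | rfl
            · simp only [pgLine, Finset.mem_union, Finset.mem_image, Finset.mem_univ,
                true_and, Finset.mem_singleton] at hlp
              rcases hlp with ⟨a, ha⟩ | h
              · obtain ⟨ha1, ha2⟩ := by simpa using ha
                exact hy ⟨c, by subst ha1; exact ha2⟩
              · simp at h
            · simp only [pgLine, Finset.mem_union, Finset.mem_image, Finset.mem_univ,
                true_and, Finset.mem_singleton] at hlp
              rcases hlp with ⟨a, ha⟩ | h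
              · obtain ⟨ha1, -⟩ := by simpa using ha
                exact hx ha1.symm
              · simp at h
            · simp [pgLine] at hlp
      · -- slope point m
        apply card_le_two_of_sub _ (Sum.inl (m, m * m)) (Sum.inr (Sum.inr ()))
        intro l hl
        rw [Finset.mem_filter] at hl
        obtain ⟨hlS, hlp⟩ := hl
        rcases memS l hlS with ⟨c, rfl⟩ | rfl | rfl
        · left
          simp only [pgLine, Finset.mem_union, Finset.mem_image, Finset.mem_univ,
            true_and, Finset.mem_singleton] at hlp
          rcases hlp with ⟨a, ha⟩ | h
          · simp at ha
          · obtain rfl : m = c := by simpa using h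
            rfl
        · exfalso; simp [pgLine] at hlp
        · right; rfl
      · -- point (ω, ω)
        apply card_le_two_of_sub _ (Sum.inr (Sum.inl 0)) (Sum.inr (Sum.inr ()))
        intro l hl
        rw [Finset.mem_filter] at hl
        obtain ⟨hlS, hlp⟩ := hl
        rcases memS l hlS with ⟨c, rfl⟩ | rfl | rfl
        · exfalso; simp [pgLine] at hlp
        · left; rfl
        · right; rfl
  · -- upper bound
    intro S hS
    rcases S.eq_empty_or_nonempty with rfl | ⟨l0, hl0⟩
    · simp
    · set f : PGPoint K → PGPoint K := fun l => Classical.choose (pgLine_meet l0 l) with hf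
      have hfs : ∀ l, f l ∈ pgLine l0 ∧ f l ∈ pgLine l :=
        fun l => Classical.choose_spec (pgLine_meet l0 l)
      have hle : (S.erase l0).card ≤ (pgLine l0).card := by
        apply Finset.card_le_card_of_injOn f (fun a _ => (hfs a).1)
        intro a ha b hb hab
        by_contra hne
        simp only [Finset.coe_erase, Set.mem_diff, Finset.mem_coe, Set.mem_singleton_iff]
          at ha hb
        have h3 : 2 < (S.filter fun l => (f a) ∈ pgLine l).card := by
          rw [Finset.two_lt_card]
          refine ⟨l0, by simp [hl0, (hfs a).1], a, by simp [ha.1, (hfs a).2], b,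
            by simp [hb.1, hab ▸ (hfs b).2], fun h => ha.2 h.symm, fun h => hb.2 h.symm, hne⟩
        exact absurd (hS (f a)) (by omega)
      rw [pgLine_card, hcard, Finset.card_erase_of_mem hl0] at hle
      have hpos : 1 ≤ S.card := Finset.card_pos.mpr ⟨l0, hl0⟩
      omega
end

section
/- For the cycle C_n, the maximum size of an intersecting family of paths (of all lengths, including single vertices) is (n^2 + n)/2, achieved by the star of all paths through a fixed vertex; moreover this maximum is also achieved by a non-star family, so C_n is P-EKR but not strictly so. -/
/-- The set of `r` consecutive vertices of the cycle `C_n` starting at `a`. -/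
def cycArc (n : ℕ) [NeZero n] (a : ZMod n) (r : ℕ) : Finset (ZMod n) :=
  (Finset.range r).image fun i : ℕ => a + (i : ZMod n)

/-- All paths of `C_n`, encoded as pairs (starting vertex, number of vertices) with
`1 ≤ r ≤ n`; a pair `(a, r)` stands for the path on vertices `a, a+1, …, a+r-1`
(for `r = n` these are the `n` spanning paths). There are `n²` paths in total. -/
def allCyclePaths (n : ℕ) [NeZero n] : Finset (ZMod n × ℕ) :=
  Finset.univ ×ˢ Finset.Icc 1 n

/-- The vertex set of an encoded path. -/
def pathVerts (n : ℕ) [NeZero n] (p : ZMod n × ℕ) : Finset (ZMod n) :=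
  cycArc n p.1 p.2

lemma mem_cycArc {n : ℕ} [NeZero n] {a x : ZMod n} {r : ℕ} (hr : r ≤ n) :
    x ∈ cycArc n a r ↔ (x - a).val < r := by
  simp only [cycArc, Finset.mem_image, Finset.mem_range]
  constructor
  · rintro ⟨i, hi, rfl⟩
    have h : a + (i : ZMod n) - a = (i : ZMod n) := by ring
    rw [h, ZMod.val_natCast_of_lt (lt_of_lt_of_le hi hr)]
    exact hi
  · intro h
    refine ⟨(x - a).val, h, ?_⟩
    rw [ZMod.natCast_val, ZMod.cast_id]
    ring

lemma natCast_val_eq {n : ℕ} [NeZero n] (x : ZMod n) : ((x.val : ℕ) : ZMod n) = x := by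
  rw [ZMod.natCast_val, ZMod.cast_id]

lemma mem_cycArc_compl {n : ℕ} [NeZero n] (hn : 3 ≤ n) {v x : ZMod n} :
    x ∈ cycArc n (v + 1) (n - 1) ↔ x ≠ v := by
  rw [mem_cycArc (Nat.sub_le n 1)]
  have hkey : v - (v + 1) = ((n - 1 : ℕ) : ZMod n) := by
    rw [Nat.cast_sub (by omega : 1 ≤ n), ZMod.natCast_self]
    push_cast
    ring
  constructor
  · intro h hx
    subst hx
    rw [hkey, ZMod.val_natCast_of_lt (by omega)] at h
    omega
  · intro hx
    by_contra h
    have hlt : (x - (v + 1)).val < n := ZMod.val_lt _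
    have heq : (x - (v + 1)).val = n - 1 := by omega
    apply hx
    have heq2 : x - (v + 1) = v - (v + 1) := by
      rw [hkey, ← heq, natCast_val_eq]
    have h3 : x - (v + 1) + (v + 1) = v - (v + 1) + (v + 1) := by rw [heq2]
    simpa using h3

lemma cycArc_disjoint {n : ℕ} [NeZero n] (a : ZMod n) {r : ℕ} (h2 : r < n) :
    ∀ x, x ∈ cycArc n a r → x ∉ cycArc n (a + (r : ZMod n)) (n - r) := by
  intro x hx hx'
  rw [mem_cycArc h2.le] at hx
  rw [mem_cycArc (Nat.sub_le n r)] at hx'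
  set k := (x - a).val with hk
  have hkey : x - (a + (r : ZMod n)) = (((k + (n - r)) : ℕ) : ZMod n) := by
    rw [Nat.cast_add, Nat.cast_sub h2.le, ZMod.natCast_self, hk, natCast_val_eq]
    ring
  rw [hkey, ZMod.val_natCast_of_lt (by omega)] at hx'
  omega

lemma gauss_sum (n : ℕ) : ∑ k ∈ Finset.range n, (n - k) = (n ^ 2 + n) / 2 := by
  have h1 : ∑ k ∈ Finset.range n, (n - k) = ∑ k ∈ Finset.range n, (k + 1) := by
    rw [← Finset.sum_range_reflect]
    exact Finset.sum_congr rfl fun j hj => by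
      rw [Finset.mem_range] at hj; omega
  rw [h1]
  symm
  apply Nat.div_eq_of_eq_mul_left (by norm_num)
  rw [Finset.sum_add_distrib, Finset.sum_const, Finset.card_range, smul_eq_mul, mul_one]
  have h2 := Finset.sum_range_id_mul_two n
  rcases n with _ | m
  · simp
  · simp only [Nat.add_sub_cancel] at h2
    nlinarith [h2]

lemma star_card {n : ℕ} [NeZero n] (v : ZMod n) :
    ((allCyclePaths n).filter fun p => v ∈ pathVerts n p).card = (n ^ 2 + n) / 2 := by
  rw [Finset.card_filter, allCyclePaths, Finset.sum_product]
  have hstep : ∀ a : ZMod n,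
      (∑ r ∈ Finset.Icc 1 n, if v ∈ pathVerts n (a, r) then 1 else 0) = n - (v - a).val := by
    intro a
    have h1 : (∑ r ∈ Finset.Icc 1 n, if v ∈ pathVerts n (a, r) then 1 else 0)
        = ∑ r ∈ Finset.Icc 1 n, if (v - a).val < r then 1 else 0 := by
      refine Finset.sum_congr rfl fun r hr => ?_
      rw [Finset.mem_Icc] at hr
      exact if_congr (mem_cycArc hr.2) rfl rfl
    rw [h1, ← Finset.card_filter]
    have h2 : (Finset.Icc 1 n).filter (fun r => (v - a).val < r)
        = Finset.Icc ((v - a).val + 1) n := by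
      ext r
      simp only [Finset.mem_filter, Finset.mem_Icc]
      omega
    rw [h2, Nat.card_Icc]
    omega
  rw [Finset.sum_congr rfl fun a _ => hstep a]
  rw [← gauss_sum n]
  apply Finset.sum_nbij' (i := fun a => (v - a).val) (j := fun k => v - (k : ZMod n))
  · intro a _; exact Finset.mem_range.mpr (ZMod.val_lt _)
  · intro k _; exact Finset.mem_univ _
  · intro a _; rw [natCast_val_eq]; ring
  · intro k hk
    rw [Finset.mem_range] at hk
    have : v - (v - (k : ZMod n)) = (k : ZMod n) := by ring
    rw [this, ZMod.val_natCast_of_lt hk]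
  · intro a _; rfl

lemma one_ne_zero_zmod {n : ℕ} [NeZero n] (hn : 3 ≤ n) : (1 : ZMod n) ≠ 0 := by
  have : Fact (1 < n) := ⟨by omega⟩
  exact one_ne_zero

/-- For the cycle `C_n`: every intersecting family of paths has size at most
`(n² + n)/2`; every star of paths at a vertex has exactly this size; and the maximum
is also attained by an intersecting non-star family, so `C_n` is `P`-EKR but not
strictly so. -/
theorem cycle_all_paths_EKR_not_strict (n : ℕ) (hn : 3 ≤ n) [NeZero n] :
    (∀ F ⊆ allCyclePaths n,
      (∀ p ∈ F, ∀ q ∈ F, (pathVerts n p ∩ pathVerts n q).Nonempty) →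
      F.card ≤ (n ^ 2 + n) / 2) ∧
    (∀ v : ZMod n,
      ((allCyclePaths n).filter fun p => v ∈ pathVerts n p).card = (n ^ 2 + n) / 2) ∧
    (∃ F ⊆ allCyclePaths n,
      (∀ p ∈ F, ∀ q ∈ F, (pathVerts n p ∩ pathVerts n q).Nonempty) ∧
      (¬ ∃ v : ZMod n, ∀ p ∈ F, v ∈ pathVerts n p) ∧
      F.card = (n ^ 2 + n) / 2) := by
  refine ⟨?_, fun v => star_card v, ?_⟩
  · -- upper bound
    intro F hF hint
    have hmemF : ∀ p ∈ F, 1 ≤ p.2 ∧ p.2 ≤ n := by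
      intro p hp
      have := hF hp
      rw [allCyclePaths, Finset.mem_product, Finset.mem_Icc] at this
      exact this.2
    classical
    set S := F.filter (fun p => p.2 = n) with hS
    set T := F.filter (fun p => p.2 ≠ n) with hT
    have hcard : S.card + T.card = F.card := by
      rw [hS, hT]
      exact Finset.card_filter_add_card_filter_not (fun p : ZMod n × ℕ => p.2 = n)
    have hScard : S.card ≤ n := by
      have hsub : S ⊆ Finset.univ.image (fun a : ZMod n => (a, n)) := by
        intro p hp
        rw [hS, Finset.mem_filter] at hp
        refine Finset.mem_image.mpr ⟨p.1, Finset.mem_univ _, ?_⟩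
        exact Prod.ext rfl hp.2.symm
      calc S.card ≤ _ := Finset.card_le_card hsub
        _ ≤ Finset.univ.card := Finset.card_image_le
        _ = n := by rw [Finset.card_univ, ZMod.card]
    set σ : ZMod n × ℕ → ZMod n × ℕ := fun p => (p.1 + (p.2 : ZMod n), n - p.2) with hσ
    set N : Finset (ZMod n × ℕ) := Finset.univ ×ˢ Finset.Icc 1 (n - 1) with hN
    have hNcard : N.card = n * (n - 1) := by
      rw [hN, Finset.card_product, Finset.card_univ, ZMod.card, Nat.card_Icc]
      congr 1
    have hTmem : ∀ p ∈ T, 1 ≤ p.2 ∧ p.2 < n := by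
      intro p hp
      rw [hT, Finset.mem_filter] at hp
      have := hmemF p hp.1
      omega
    have hTN : T ⊆ N := by
      intro p hp
      have := hTmem p hp
      rw [hN, Finset.mem_product, Finset.mem_Icc]
      exact ⟨Finset.mem_univ _, by omega⟩
    have hσTN : T.image σ ⊆ N := by
      intro q hq
      rw [Finset.mem_image] at hq
      obtain ⟨p, hp, rfl⟩ := hq
      have := hTmem p hp
      rw [hN, Finset.mem_product, Finset.mem_Icc]
      exact ⟨Finset.mem_univ _, by simp only [hσ]; omega⟩
    have hinj : Set.InjOn σ T := by
      intro p hp q hq heq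
      have h1 := hTmem p hp
      have h2 := hTmem q hq
      simp only [hσ, Prod.mk.injEq] at heq
      have h22 : p.2 = q.2 := by omega
      have h11 : p.1 = q.1 := by
        have := heq.1
        rw [h22] at this
        exact add_right_cancel this
      exact Prod.ext h11 h22
    have hdisj : Disjoint T (T.image σ) := by
      rw [Finset.disjoint_left]
      intro q hq hq'
      rw [Finset.mem_image] at hq'
      obtain ⟨p, hp, rfl⟩ := hq'
      have hp2 := hTmem p hp
      have hpF : p ∈ F := (Finset.mem_filter.mp hp).1
      have hqF : σ p ∈ F := (Finset.mem_filter.mp hq).1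
      obtain ⟨x, hx⟩ := hint p hpF (σ p) hqF
      rw [Finset.mem_inter] at hx
      exact cycArc_disjoint p.1 hp2.2 x hx.1 hx.2
    have hT2 : T.card * 2 ≤ n * (n - 1) := by
      have h1 : (T ∪ T.image σ).card ≤ N.card :=
        Finset.card_le_card (Finset.union_subset hTN hσTN)
      rw [Finset.card_union_of_disjoint hdisj, Finset.card_image_of_injOn hinj, hNcard] at h1
      omega
    rw [Nat.le_div_iff_mul_le (by norm_num : 0 < 2), ← hcard]
    have hid : n * (n - 1) + 2 * n = n ^ 2 + n := by
      obtain ⟨m, rfl⟩ : ∃ m, n = m + 1 := ⟨n - 1, by omega⟩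
      simp only [Nat.add_sub_cancel]
      ring
    -- (S.card + T.card) * 2 ≤ n^2 + n
    nlinarith [hScard, hT2, hid]
  · -- non-star family
    classical
    set star := (allCyclePaths n).filter (fun p => (0 : ZMod n) ∈ pathVerts n p) with hstar
    set P : ZMod n × ℕ := ((1 : ZMod n), n - 1) with hP
    set F := insert P (star.erase ((0 : ZMod n), 1)) with hFdef
    have h1n : (1 : ZMod n) = (0 : ZMod n) + 1 := by ring
    have hPverts : ∀ x : ZMod n, x ∈ pathVerts n P ↔ x ≠ 0 := by
      intro x
      rw [hP]
      show x ∈ cycArc n 1 (n - 1) ↔ x ≠ 0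
      rw [h1n]
      exact mem_cycArc_compl hn
    have hPnotstar : P ∉ star := by
      rw [hstar, Finset.mem_filter]
      rintro ⟨-, h⟩
      exact (hPverts 0).mp h rfl
    have h01star : ((0 : ZMod n), 1) ∈ star := by
      rw [hstar, Finset.mem_filter]
      constructor
      · rw [allCyclePaths, Finset.mem_product, Finset.mem_Icc]
        exact ⟨Finset.mem_univ _, by omega⟩
      · show (0 : ZMod n) ∈ cycArc n 0 1
        rw [mem_cycArc (by omega : 1 ≤ n)]
        simp
    -- helper: members of star.erase (0,1) contain a nonzero vertex
    have hkey : ∀ p ∈ star.erase ((0 : ZMod n), 1), ∃ x, x ∈ pathVerts n p ∧ x ≠ 0 := by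
      intro p hp
      rw [Finset.mem_erase, hstar, Finset.mem_filter, allCyclePaths,
        Finset.mem_product, Finset.mem_Icc] at hp
      obtain ⟨hne, ⟨-, hr⟩, h0⟩ := hp
      rcases Nat.lt_or_ge p.2 2 with h2 | h2
      · -- p.2 = 1, so p = (p.1, 1) and vertex set is {p.1}
        exfalso
        have hp2 : p.2 = 1 := by omega
        have : (0 : ZMod n) ∈ cycArc n p.1 p.2 := h0
        rw [mem_cycArc hr.2, hp2] at this
        have hval : ((0 : ZMod n) - p.1).val = 0 := by omega
        have : (0 : ZMod n) - p.1 = 0 := by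
          have := natCast_val_eq ((0 : ZMod n) - p.1)
          rw [hval] at this
          simpa using this.symm
        have hp1 : p.1 = 0 := by
          have h4 : p.1 = 0 - ((0:ZMod n) - p.1) := by ring
          rw [this] at h4
          simpa using h4
        exact hne (Prod.ext hp1 hp2)
      · -- p.2 ≥ 2: both p.1 and p.1 + 1 are vertices; one is nonzero
        have hm1 : p.1 ∈ pathVerts n p := by
          show p.1 ∈ cycArc n p.1 p.2
          refine Finset.mem_image.mpr ⟨0, Finset.mem_range.mpr (by omega), by simp⟩
        have hm2 : p.1 + 1 ∈ pathVerts n p := by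
          show p.1 + 1 ∈ cycArc n p.1 p.2
          refine Finset.mem_image.mpr ⟨1, Finset.mem_range.mpr (by omega), by push_cast; ring⟩
        rcases eq_or_ne p.1 0 with h | h
        · refine ⟨p.1 + 1, hm2, ?_⟩
          rw [h, zero_add]
          exact one_ne_zero_zmod hn
        · exact ⟨p.1, hm1, h⟩
    have hFsub : F ⊆ allCyclePaths n := by
      rw [hFdef]
      intro p hp
      rcases Finset.mem_insert.mp hp with h | h
      · subst h
        rw [allCyclePaths, Finset.mem_product, Finset.mem_Icc, hP]
        exact ⟨Finset.mem_univ _, by omega⟩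
      · exact (Finset.mem_filter.mp (Finset.mem_of_mem_erase h)).1
    have hFint : ∀ p ∈ F, ∀ q ∈ F, (pathVerts n p ∩ pathVerts n q).Nonempty := by
      intro p hp q hq
      rw [hFdef] at hp hq
      rcases Finset.mem_insert.mp hp with h1 | h1 <;>
        rcases Finset.mem_insert.mp hq with h2 | h2
      · subst h1; subst h2
        exact ⟨1, Finset.mem_inter.mpr ⟨(hPverts 1).mpr (one_ne_zero_zmod hn),
          (hPverts 1).mpr (one_ne_zero_zmod hn)⟩⟩
      · subst h1
        obtain ⟨x, hx, hx0⟩ := hkey q h2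
        exact ⟨x, Finset.mem_inter.mpr ⟨(hPverts x).mpr hx0, hx⟩⟩
      · subst h2
        obtain ⟨x, hx, hx0⟩ := hkey p h1
        exact ⟨x, Finset.mem_inter.mpr ⟨hx, (hPverts x).mpr hx0⟩⟩
      · have hp0 : (0 : ZMod n) ∈ pathVerts n p :=
          (Finset.mem_filter.mp (Finset.mem_of_mem_erase h1)).2
        have hq0 : (0 : ZMod n) ∈ pathVerts n q :=
          (Finset.mem_filter.mp (Finset.mem_of_mem_erase h2)).2
        exact ⟨0, Finset.mem_inter.mpr ⟨hp0, hq0⟩⟩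
    have hmem02 : ((0 : ZMod n), 2) ∈ F := by
      rw [hFdef]
      apply Finset.mem_insert_of_mem
      rw [Finset.mem_erase]
      constructor
      · simp
      · rw [hstar, Finset.mem_filter]
        constructor
        · rw [allCyclePaths, Finset.mem_product, Finset.mem_Icc]
          exact ⟨Finset.mem_univ _, by omega⟩
        · show (0 : ZMod n) ∈ cycArc n 0 2
          refine Finset.mem_image.mpr ⟨0, Finset.mem_range.mpr (by omega), by simp⟩
    have hmemm12 : ((-1 : ZMod n), 2) ∈ F := by
      rw [hFdef]
      apply Finset.mem_insert_of_mem
      rw [Finset.mem_erase]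
      constructor
      · simp
      · rw [hstar, Finset.mem_filter]
        constructor
        · rw [allCyclePaths, Finset.mem_product, Finset.mem_Icc]
          exact ⟨Finset.mem_univ _, by omega⟩
        · show (0 : ZMod n) ∈ cycArc n (-1) 2
          refine Finset.mem_image.mpr ⟨1, Finset.mem_range.mpr (by omega), by push_cast; ring⟩
    have hnotstar : ¬ ∃ v : ZMod n, ∀ p ∈ F, v ∈ pathVerts n p := by
      rintro ⟨w, hw⟩
      have hwP : w ≠ 0 := (hPverts w).mp (hw P (by rw [hFdef]; exact Finset.mem_insert_self _ _))
      have hw02 := hw _ hmem02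
      have hwm12 := hw _ hmemm12
      -- w ∈ {0, 1} and w ∈ {-1, 0}
      have h02 : w = 0 ∨ w = 1 := by
        have : w ∈ cycArc n 0 2 := hw02
        rw [cycArc] at this
        obtain ⟨i, hi, rfl⟩ := Finset.mem_image.mp this
        rw [Finset.mem_range] at hi
        interval_cases i
        · left; simp
        · right; simp
      have hm12 : w = -1 ∨ w = 0 := by
        have : w ∈ cycArc n (-1) 2 := hwm12
        rw [cycArc] at this
        obtain ⟨i, hi, rfl⟩ := Finset.mem_image.mp this
        rw [Finset.mem_range] at hi
        interval_cases i
        · left; simp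
        · right; push_cast; ring
      have hw1 : w = 1 := h02.resolve_left hwP
      have hwm1 : w = -1 := hm12.resolve_right hwP
      have h2 : ((2 : ℕ) : ZMod n) = 0 := by
        push_cast
        linear_combination hwm1 - hw1
      rw [ZMod.natCast_eq_zero_iff] at h2
      have := Nat.le_of_dvd (by norm_num) h2
      omega
    have hFcard : F.card = (n ^ 2 + n) / 2 := by
      rw [hFdef]
      rw [Finset.card_insert_of_notMem (fun h => hPnotstar (Finset.mem_of_mem_erase h))]
      rw [Finset.card_erase_of_mem h01star]
      have h1 : 1 ≤ star.card := Finset.card_pos.mpr ⟨_, h01star⟩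
      rw [hstar, star_card]
      rw [hstar, star_card] at h1
      omega
    exact ⟨F, hFsub, hFint, hnotstar, hFcard⟩
end
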